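/- arXiv:2502.00872 — 6 statements merged into one kernel-verified Lean document; each statement's English description precedes it below -/
import Mathlib

section
/- Let G be a finite simple graph on vertex set V. If a word w represents G and every vertex of V occurs in w at least once, then there exist k ≥ 1 and a k-uniform word representing G. -/
def Alternates {V : Type*} [DecidableEq V] (a b : V) (w : List V) : Prop :=
  (w.filter (fun x => x = a ∨ x = b)).Chain' (· ≠ ·)

/-- The word `w` represents the graph `G`. -/
def Represents {V : Type*} [DecidableEq V] (G : SimpleGraph V) (w : List V) : Prop :=
  ∀ a b : V, a ≠ b → (G.Adj a b ↔ Alternates a b w)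

namespace ExistsUniform

variable {V : Type*} [DecidableEq V]

def firsts : List V → List V
  | [] => []
  | x :: t => x :: (firsts t).filter (fun y => y ≠ x)

theorem mem_firsts {l : List V} {x : V} : x ∈ firsts l ↔ x ∈ l := by
  induction l with
  | nil => simp [firsts]
  | cons y t ih =>
    by_cases hxy : x = y <;> simp [firsts, List.mem_filter, ih, hxy]

theorem nodup_firsts (l : List V) : (firsts l).Nodup := by
  induction l with
  | nil => simp [firsts]
  | cons y t ih =>
    refine List.Nodup.cons ?_ (ih.filter _)
    simp [List.mem_filter]

theorem filter_firsts (p : V → Bool) (l : List V) :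
    (firsts l).filter p = firsts (l.filter p) := by
  induction l with
  | nil => simp [firsts]
  | cons x t ih =>
    have hcomm : ∀ (m : List V) (hyp : p x = false),
        List.filter (fun a => p a && decide (a ≠ x)) m = List.filter p m := by
      intro m hyp
      apply List.filter_congr; intro y _
      by_cases hy : p y
      · have hne : y ≠ x := fun h => by subst h; simp [hy] at hyp
        simp [hy, hne]
      · simp [hy]
    by_cases hpx : p x
    · show (x :: (firsts t).filter (fun y => decide (y ≠ x))).filter p
          = firsts ((x :: t).filter p)
      rw [List.filter_cons_of_pos hpx, List.filter_cons_of_pos hpx]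
      show _ = x :: (firsts (t.filter p)).filter (fun y => decide (y ≠ x))
      rw [← ih, List.filter_filter, List.filter_filter]
      congr 1
      apply List.filter_congr; intro y _; rw [Bool.and_comm]
    · have hpx' : p x = false := by simpa using hpx
      show (x :: (firsts t).filter (fun y => decide (y ≠ x))).filter p
          = firsts ((x :: t).filter p)
      rw [List.filter_cons_of_neg (by simp [hpx']), List.filter_cons_of_neg (by simp [hpx']),
        List.filter_filter, hcomm _ hpx', ih]

theorem alt_count (a b : V) (hab : a ≠ b) :
    ∀ n (l : List V), l.length ≤ n → (∀ x ∈ l, x = a ∨ x = b) →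
      List.Chain' (· ≠ ·) (a :: l) → (a :: l).count b ≤ (a :: l).count a := by
  intro n
  induction n with
  | zero =>
    intro l hl _ _
    have : l = [] := List.eq_nil_of_length_eq_zero (Nat.le_zero.mp hl)
    subst this; simp [List.count_cons, hab, Ne.symm hab]
  | succ n ih =>
    intro l hl hmem hch
    match l with
    | [] => simp [List.count_cons, hab, Ne.symm hab]
    | x :: t =>
      have hax : a ≠ x := (List.isChain_cons_cons.mp hch).1
      have hx : b = x := by
        rcases hmem x (by simp) with h | h
        · exact absurd h.symm hax
        · exact h.symm
      subst hx
      match t with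
      | [] => simp [List.count_cons, hab, Ne.symm hab]
      | y :: t' =>
        have hch2 : List.Chain' (· ≠ ·) (b :: y :: t') := (List.isChain_cons_cons.mp hch).2
        have hby : b ≠ y := (List.isChain_cons_cons.mp hch2).1
        have hy : a = y := by
          rcases hmem y (by simp) with h | h
          · exact h.symm
          · exact absurd h.symm hby
        subst hy
        have hch3 : List.Chain' (· ≠ ·) (a :: t') := (List.isChain_cons_cons.mp hch2).2
        have hlen : t'.length ≤ n := by simp at hl; omega
        have hmem' : ∀ x ∈ t', x = a ∨ x = b := fun x hx => hmem x (by simp [hx])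
        have := ih t' hlen hmem' hch3
        simp only [List.count_cons] at *
        simp_all

theorem nodup_eq_singleton {l : List V} {a : V} (hn : l.Nodup) (ha : a ∈ l)
    (hall : ∀ x ∈ l, x = a) : l = [a] := by
  cases l with
  | nil => cases ha
  | cons x t =>
    have hx : x = a := hall x (by simp)
    have ht : t = [] := by
      by_contra h
      obtain ⟨y, hy⟩ := List.exists_mem_of_ne_nil t h
      have hya : y = a := hall y (by simp [hy])
      have : x ∈ t := by rw [hx, ← hya]; exact hy
      exact (List.nodup_cons.mp hn).1 this
    rw [hx, ht]

variable (w : List V) (k : ℕ)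

/-- The deficient letters of `w`, in order of first occurrence. -/
def defPerm : List V := (firsts w).filter (fun v => decide (w.count v < k))

theorem nodup_defPerm : (defPerm w k).Nodup := (nodup_firsts w).filter _

theorem mem_defPerm {v : V} : v ∈ defPerm w k ↔ v ∈ w ∧ w.count v < k := by
  simp [defPerm, List.mem_filter, mem_firsts]

theorem count_defPerm (v : V) :
    (defPerm w k).count v = if v ∈ w ∧ w.count v < k then 1 else 0 := by
  by_cases h : v ∈ w ∧ w.count v < k
  · rw [if_pos h]
    exact List.count_eq_one_of_mem (nodup_defPerm w k) ((mem_defPerm w k).mpr h)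
  · rw [if_neg h]
    exact List.count_eq_zero_of_not_mem (fun hm => h ((mem_defPerm w k).mp hm))

theorem key_left (hocc : ∀ v : V, v ∈ w) (hk : ∀ v : V, w.count v ≤ k)
    {a b : V} (hab : a ≠ b) (hda : w.count a < k) :
    Alternates a b (defPerm w k ++ w) ↔ Alternates a b w := by
  unfold Alternates
  rw [List.filter_append]
  set pred : V → Bool := fun x => decide (x = a ∨ x = b) with hpred
  have hpa : pred a = true := by simp [hpred]
  have hpb : pred b = true := by simp [hpred]
  set f : List V := w.filter pred with hf
  have haf : a ∈ f := List.mem_filter.mpr ⟨hocc a, hpa⟩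
  have hbf : b ∈ f := List.mem_filter.mpr ⟨hocc b, hpb⟩
  have hfmem : ∀ x ∈ f, x = a ∨ x = b := by
    intro x hx
    have := (List.mem_filter.mp hx).2
    simpa [hpred] using this
  by_cases hdb : w.count b < k
  · -- both deficient: prefix contributes [c, d] where c is the first letter of f
    have hPf : (defPerm w k).filter pred = firsts f := by
      rw [defPerm, List.filter_filter]
      rw [show (List.filter (fun v => pred v && decide (w.count v < k)) (firsts w))
          = List.filter pred (firsts w) by
        apply List.filter_congr
        intro x _
        by_cases hx : pred x = true
        · have : x = a ∨ x = b := by simpa [hpred] using hx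
          rcases this with h | h <;> subst h <;> simp [hx, hda, hdb]
        · simp at hx; simp [hx]]
      exact filter_firsts pred w
    rw [hPf]
    obtain ⟨c, t, hct⟩ : ∃ c t, f = c :: t := by
      cases hfe : f with
      | nil => rw [hfe] at haf; cases haf
      | cons c t => exact ⟨c, t, rfl⟩
    rw [hct]
    have hcab : c = a ∨ c = b := hfmem c (hct ▸ (List.mem_cons_self : c ∈ c :: t))
    -- d is the other letter
    obtain ⟨d, hdab, hdc⟩ : ∃ d, (d = a ∨ d = b) ∧ d ≠ c := by
      rcases hcab with h | h
      · exact ⟨b, Or.inr rfl, by rw [h]; exact Ne.symm hab⟩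
      · exact ⟨a, Or.inl rfl, by rw [h]; exact hab⟩
    have hdf : d ∈ t := by
      have : d ∈ f := by rcases hdab with h | h <;> subst h <;> assumption
      rw [hct] at this
      rcases List.mem_cons.mp this with h | h
      · exact absurd h hdc
      · exact h
    have hr : (firsts t).filter (fun y => decide (y ≠ c)) = [d] := by
      apply nodup_eq_singleton ((nodup_firsts t).filter _)
      · exact List.mem_filter.mpr ⟨mem_firsts.mpr hdf, by simp [hdc]⟩
      · intro x hx
        obtain ⟨hx1, hx2⟩ := List.mem_filter.mp hx
        have hxf : x ∈ f := by rw [hct]; exact List.mem_cons_of_mem _ (mem_firsts.mp hx1)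
        have hxab := hfmem x hxf
        have hxc : x ≠ c := by simpa using hx2
        rcases hxab with h | h <;> rcases hcab with h' | h' <;>
          rcases hdab with h'' | h'' <;> simp_all
    show List.Chain' _ ((c :: (firsts t).filter _) ++ (c :: t)) ↔ _
    rw [hr]
    show List.Chain' _ (c :: d :: c :: t) ↔ _
    simp only [List.Chain', List.isChain_cons_cons]
    have : c ≠ d := Ne.symm hdc
    tauto
  · -- a deficient, b not: prefix contributes [a]
    have hPf : (defPerm w k).filter pred = [a] := by
      apply nodup_eq_singleton ((nodup_defPerm w k).filter _)
      · exact List.mem_filter.mpr ⟨(mem_defPerm w k).mpr ⟨hocc a, hda⟩, hpa⟩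
      · intro x hx
        obtain ⟨hx1, hx2⟩ := List.mem_filter.mp hx
        have h1 := (mem_defPerm w k).mp hx1
        have h2 : x = a ∨ x = b := by simpa [hpred] using hx2
        rcases h2 with h | h
        · exact h
        · subst h; exact absurd h1.2 hdb
    rw [hPf]
    obtain ⟨c, t, hct⟩ : ∃ c t, f = c :: t := by
      cases hfe : f with
      | nil => rw [hfe] at haf; cases haf
      | cons c t => exact ⟨c, t, rfl⟩
    rw [hct]
    have hcab : c = a ∨ c = b := hfmem c (hct ▸ (List.mem_cons_self : c ∈ c :: t))
    rcases hcab with hc | hc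
    · -- f starts with a : both sides are false
      subst hc
      show List.Chain' _ ([c] ++ (c :: t)) ↔ _
      constructor
      · intro h
        exact absurd (List.isChain_cons_cons.mp h).1 (by simp)
      · intro h
        exfalso
        -- f = c :: t alternates starting with c = a; count argument
        have hmt : ∀ x ∈ t, x = c ∨ x = b := by
          intro x hx
          exact hfmem x (by rw [hct]; exact List.mem_cons_of_mem _ hx)
        have hcnt := alt_count c b hab t.length t le_rfl hmt h
        have hca : f.count c = w.count c := by rw [hf]; exact List.count_filter hpa
        have hcb : f.count b = w.count b := by rw [hf]; exact List.count_filter hpb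
        rw [hct] at hca hcb
        have hkb : k ≤ w.count b := Nat.le_of_not_lt hdb
        omega
    · -- f starts with b
      subst hc
      show List.Chain' _ ([a] ++ (c :: t)) ↔ _
      rw [List.cons_append, List.nil_append]
      simp only [List.Chain', List.isChain_cons_cons]
      tauto

theorem alternates_comm (a b : V) (u : List V) :
    Alternates a b u ↔ Alternates b a u := by
  unfold Alternates
  rw [List.filter_congr (fun x _ => by simp [or_comm] : ∀ x ∈ u,
    (decide (x = a ∨ x = b)) = (decide (x = b ∨ x = a)))]

theorem key (hocc : ∀ v : V, v ∈ w) (hk : ∀ v : V, w.count v ≤ k)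
    {a b : V} (hab : a ≠ b) :
    Alternates a b (defPerm w k ++ w) ↔ Alternates a b w := by
  by_cases hda : w.count a < k
  · exact key_left w k hocc hk hab hda
  · by_cases hdb : w.count b < k
    · rw [alternates_comm, alternates_comm a b w]
      exact key_left w k hocc hk (Ne.symm hab) hdb
    · -- neither deficient: prefix contributes nothing
      unfold Alternates
      rw [List.filter_append]
      have : (defPerm w k).filter (fun x => decide (x = a ∨ x = b)) = [] := by
        rw [List.filter_eq_nil_iff]
        intro x hx
        have h1 := (mem_defPerm w k).mp hx
        simp only [decide_eq_true_eq, not_or]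
        constructor
        · intro h; subst h; exact hda h1.2
        · intro h; subst h; exact hdb h1.2
      rw [this, List.nil_append]

end ExistsUniform

theorem exists_uniform_representant {V : Type*} [DecidableEq V] [Fintype V]
    (G : SimpleGraph V) (w : List V) (hrep : Represents G w)
    (hocc : ∀ v : V, v ∈ w) :
    ∃ k ≥ 1, ∃ w' : List V, (∀ v : V, w'.count v = k) ∧ Represents G w' := by
  classical
  set k : ℕ := (Finset.univ.sup fun v : V => w.count v) + 1 with hkdef
  have hk1 : 1 ≤ k := Nat.le_add_left 1 _
  have hk : ∀ v : V, w.count v ≤ k := by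
    intro v
    have := Finset.le_sup (f := fun v : V => w.count v) (Finset.mem_univ v)
    omega
  suffices h : ∀ n (u : List V), (∀ v : V, v ∈ u) → (∀ v : V, u.count v ≤ k) →
      Represents G u → (∑ v : V, (k - u.count v)) ≤ n →
      ∃ w' : List V, (∀ v : V, w'.count v = k) ∧ Represents G w' by
    obtain ⟨w', hw1, hw2⟩ := h (∑ v : V, (k - w.count v)) w hocc hk hrep le_rfl
    exact ⟨k, hk1, w', hw1, hw2⟩
  intro n
  induction n with
  | zero =>
    intro u huocc huk hurep hsum
    refine ⟨u, fun v => ?_, hurep⟩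
    have := Finset.sum_eq_zero_iff.mp (Nat.le_zero.mp hsum) v (Finset.mem_univ v)
    have h2 := huk v
    omega
  | succ n ih =>
    intro u huocc huk hurep hsum
    by_cases hall : ∀ v : V, u.count v = k
    · exact ⟨u, hall, hurep⟩
    · push_neg at hall
      obtain ⟨v0, hv0⟩ := hall
      have hv0lt : u.count v0 < k := lt_of_le_of_ne (huk v0) hv0
      set u' : List V := ExistsUniform.defPerm u k ++ u with hu'
      have hcnt : ∀ v : V, u'.count v =
          (if v ∈ u ∧ u.count v < k then 1 else 0) + u.count v := by
        intro v
        rw [hu', List.count_append, ExistsUniform.count_defPerm]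
      have hocc' : ∀ v : V, v ∈ u' := fun v => List.mem_append_right _ (huocc v)
      have huk' : ∀ v : V, u'.count v ≤ k := by
        intro v
        rw [hcnt v]
        by_cases h : v ∈ u ∧ u.count v < k
        · rw [if_pos h]; omega
        · rw [if_neg h]; simpa using huk v
      have hurep' : Represents G u' := by
        intro a b hab
        exact (hurep a b hab).trans (ExistsUniform.key u k huocc huk hab).symm
      have hsum' : (∑ v : V, (k - u'.count v)) ≤ n := by
        have hlt : (∑ v : V, (k - u'.count v)) < ∑ v : V, (k - u.count v) := by
          apply Finset.sum_lt_sum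
          · intro i _
            rw [hcnt i]
            by_cases h : i ∈ u ∧ u.count i < k
            · rw [if_pos h]; omega
            · rw [if_neg h]; omega
          · refine ⟨v0, Finset.mem_univ v0, ?_⟩
            rw [hcnt v0, if_pos ⟨huocc v0, hv0lt⟩]
            omega
        omega
      exact ih u' hocc' huk' hurep' hsum'
end

section
/- For every even integer k ≥ 4, the even k-sun is a word-representable graph; moreover its clique vertices admit a labelling c_i ↦ i from 1 to k such that N(a_i) = [i, i+1] for 1 ≤ i ≤ k−1 and N(a_k) = {1} ∪ {k}, satisfying the Kitaev–Long–Ma (split-graph word-representability) neighborhood conditions: every N(a) is either an interval [l, r] or of the form [1, m] ∪ [n, k] with m < n; for any a with N(a) = [1,m] ∪ [n,k] and b with N(b) = [l,r], we have l > m or r < n; and for any a, b with N(a) = [1,m]∪[n,k], N(b) = [1,m']∪[n',k], we have m' < n and m < n'. -/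
/-- `S` is an interval `[l, r]` of positive integers. -/
def IsIcc (S : Finset ℕ) : Prop := ∃ l r, l ≤ r ∧ S = Finset.Icc l r

/-- `S` has the form `[1, m] ∪ [n, K]` with `m < n`. -/
def IsEndForm (K : ℕ) (S : Finset ℕ) : Prop :=
  ∃ m n, m < n ∧ S = Finset.Icc 1 m ∪ Finset.Icc n K

/-- Cross condition between a set of form `[1,m] ∪ [n,K]` and an interval `[l,r]`. -/
def CrossII (K : ℕ) (S T : Finset ℕ) : Prop :=
  ∀ m n l r, m < n → S = Finset.Icc 1 m ∪ Finset.Icc n K →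
    l ≤ r → T = Finset.Icc l r → (m < l ∨ r < n)

/-- Cross condition between two sets of form `[1,m] ∪ [n,K]`. -/
def CrossIII (K : ℕ) (S T : Finset ℕ) : Prop :=
  ∀ m n m' n', m < n → m' < n' → S = Finset.Icc 1 m ∪ Finset.Icc n K →
    T = Finset.Icc 1 m' ∪ Finset.Icc n' K → (m' < n ∧ m < n')

/-- The Kitaev et al. word-representability conditions for a family `F` of
neighborhoods in a clique labeled `1, ..., K`. -/
def SplitWRCond (K : ℕ) (F : Finset (Finset ℕ)) : Prop :=
  (∀ S ∈ F, IsIcc S ∨ IsEndForm K S) ∧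
  (∀ S ∈ F, ∀ T ∈ F, CrossII K S T) ∧
  (∀ S ∈ F, ∀ T ∈ F, CrossIII K S T)

private lemma evenSun_mem_cases {k : ℕ} {S : Finset ℕ}
    (hS : S ∈ insert ({1, k} : Finset ℕ)
      ((Finset.Icc 1 (k - 1)).image (fun i => Finset.Icc i (i + 1)))) :
    S = {1, k} ∨ ∃ i, 1 ≤ i ∧ i ≤ k - 1 ∧ S = Finset.Icc i (i + 1) := by
  simp only [Finset.mem_insert, Finset.mem_image, Finset.mem_Icc] at hS
  rcases hS with h | ⟨i, ⟨h1, h2⟩, h3⟩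
  · exact Or.inl h
  · exact Or.inr ⟨i, h1, h2, h3.symm⟩

private lemma evenSun_end_classify {k m n : ℕ} (hk : 4 ≤ k) (hmn : m < n) {S : Finset ℕ}
    (hmem : S = {1, k} ∨ ∃ i, 1 ≤ i ∧ i ≤ k - 1 ∧ S = Finset.Icc i (i + 1))
    (h : S = Finset.Icc 1 m ∪ Finset.Icc n k) :
    (m = 1 ∧ n = k) ∨ (m = 2 ∧ k < n) ∨ (m = 0 ∧ n = k - 1) := by
  rcases hmem with h1 | ⟨i, hi1, hi2, h1⟩
  · rw [h1] at h
    have e := fun x => Finset.ext_iff.mp h x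
    simp only [Finset.mem_insert, Finset.mem_singleton, Finset.mem_union, Finset.mem_Icc] at e
    have e1 := e 1
    have e2 := e 2
    have ek := e k
    have ek1 := e (k - 1)
    have em := e m
    have en := e n
    omega
  · rw [h1] at h
    have e := fun x => Finset.ext_iff.mp h x
    simp only [Finset.mem_union, Finset.mem_Icc] at e
    have e1 := e 1
    have e2 := e 2
    have e3 := e 3
    have ei := e i
    have ei1 := e (i + 1)
    have ei2 := e (i + 2)
    have eim := e (i - 1)
    have em := e m
    have en := e n
    have ek := e k
    have ek1 := e (k - 1)
    omega

private lemma evenSun_icc_classify {k l r : ℕ} (hk : 4 ≤ k) (hlr : l ≤ r) {T : Finset ℕ}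
    (hmem : T = {1, k} ∨ ∃ i, 1 ≤ i ∧ i ≤ k - 1 ∧ T = Finset.Icc i (i + 1))
    (h : T = Finset.Icc l r) :
    1 ≤ l ∧ r ≤ k ∧ r = l + 1 := by
  rcases hmem with h1 | ⟨i, hi1, hi2, h1⟩
  · rw [h1] at h
    have e := fun x => Finset.ext_iff.mp h x
    simp only [Finset.mem_insert, Finset.mem_singleton, Finset.mem_Icc] at e
    have e1 := e 1
    have e2 := e 2
    have ek := e k
    omega
  · rw [h1] at h
    have e := fun x => Finset.ext_iff.mp h x
    simp only [Finset.mem_Icc] at e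
    have ei := e i
    have ei1 := e (i + 1)
    have el := e l
    have er := e r
    omega

/-- For even `k ≥ 4`, the labelling `c_i ↦ i` of the even `k`-sun, with
`N(a_i) = [i, i+1]` for `i ≤ k-1` and `N(a_k) = {1, k}`, satisfies the
split-graph word-representability conditions, so the even `k`-sun is
word-representable. -/
theorem evenSun_word_representable (k : ℕ) (hk : 4 ≤ k) (hke : Even k) :
    SplitWRCond k
      (insert ({1, k} : Finset ℕ)
        ((Finset.Icc 1 (k - 1)).image (fun i => Finset.Icc i (i + 1)))) := by
  refine ⟨?_, ?_, ?_⟩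
  · intro S hS
    rcases evenSun_mem_cases hS with h | ⟨i, hi1, hi2, h⟩
    · right
      refine ⟨1, k, by omega, ?_⟩
      rw [h]
      ext x
      simp only [Finset.mem_insert, Finset.mem_singleton, Finset.mem_union, Finset.mem_Icc]
      omega
    · exact Or.inl ⟨i, i + 1, by omega, h⟩
  · intro S hS T hT m n l r hmn hSe hlr hTe
    have h1 := evenSun_end_classify hk hmn (evenSun_mem_cases hS) hSe
    have h2 := evenSun_icc_classify hk hlr (evenSun_mem_cases hT) hTe
    omega
  · intro S hS T hT m n m' n' hmn hmn' hSe hTe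
    have h1 := evenSun_end_classify hk hmn (evenSun_mem_cases hS) hSe
    have h2 := evenSun_end_classify hk hmn' (evenSun_mem_cases hT) hTe
    omega
end

section
/- For every even integer k ≥ 4, there is no labelling of the clique vertices of M_II(k) by 1,...,k satisfying the split-graph word-representability conditions; i.e., there is no bijection φ: C → {1,...,k} such that (i) each φ(N(a)) for a ∈ I is either an interval [l, r] or a set [1,m] ∪ [n,k] with m < n, (ii) if φ(N(a)) = [1,m]∪[n,k] and φ(N(b)) = [l,r] then l > m or r < n, and (iii) if φ(N(a)) = [1,m]∪[n,k] and φ(N(b)) = [1,m']∪[n',k] then m' < n and m < n'. -/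

lemma modeq_cases {k a b : ℕ} (hk : 4 ≤ k) (h : a % k = b % k)
    (ha : 1 ≤ a) (ha2 : a ≤ k + 2) (hb : 1 ≤ b) (hb2 : b ≤ k) :
    a = b ∨ a = b + k := by
  rcases lt_or_eq_of_le hb2 with hb' | hbk
  · rw [Nat.mod_eq_of_lt hb'] at h
    rcases lt_or_ge a k with ha' | ha'
    · rw [Nat.mod_eq_of_lt ha'] at h; omega
    · rw [Nat.mod_eq_sub_mod ha', Nat.mod_eq_of_lt (by omega)] at h; omega
  · rw [hbk, Nat.mod_self] at h
    rcases lt_or_ge a k with ha' | ha'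
    · rw [Nat.mod_eq_of_lt ha'] at h; omega
    · rw [Nat.mod_eq_sub_mod ha', Nat.mod_eq_of_lt (by omega)] at h; omega

lemma cast_inj' {k a b : ℕ} (hk : 4 ≤ k) (h : (a : ZMod k) = b)
    (ha : 1 ≤ a) (ha2 : a ≤ k) (hb : 1 ≤ b) (hb2 : b ≤ k) : a = b := by
  rw [ZMod.natCast_eq_natCast_iff] at h
  have h' : a % k = b % k := h
  rcases modeq_cases hk h' ha (by omega) hb hb2 with h | h <;> omega

lemma pair_icc {a b l r : ℕ} (hab : a < b) (h : ({a, b} : Finset ℕ) = Finset.Icc l r) :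
    b = a + 1 := by
  have ha : a ∈ Finset.Icc l r := by rw [← h]; simp
  have hb : b ∈ Finset.Icc l r := by rw [← h]; simp
  rw [Finset.mem_Icc] at ha hb
  have h1 : a + 1 ∈ ({a, b} : Finset ℕ) := by rw [h, Finset.mem_Icc]; omega
  simp only [Finset.mem_insert, Finset.mem_singleton] at h1
  omega

lemma pair_step {k a b : ℕ} (hk : 4 ≤ k) (ha1 : 1 ≤ a) (ha2 : a ≤ k)
    (hb1 : 1 ≤ b) (hb2 : b ≤ k) (hab : a < b)
    (h : IsIcc {a, b} ∨ IsEndForm k {a, b}) :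
    b = a + 1 ∨ (a = 1 ∧ b = k) := by
  rcases h with ⟨l, r, _, h⟩ | ⟨m, n, hmn, h⟩
  · exact Or.inl (pair_icc hab h)
  · rcases Nat.eq_zero_or_pos m with rfl | hm
    · rw [Finset.Icc_eq_empty (by omega), Finset.empty_union] at h
      exact Or.inl (pair_icc hab h)
    · rcases le_or_gt n k with hn | hn
      · have h1 : (1:ℕ) ∈ ({a, b} : Finset ℕ) := by
          rw [h]; simp only [Finset.mem_union, Finset.mem_Icc]; omega
        have hkk : k ∈ ({a, b} : Finset ℕ) := by
          rw [h]; simp only [Finset.mem_union, Finset.mem_Icc]; omega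
        simp only [Finset.mem_insert, Finset.mem_singleton] at h1 hkk
        omega
      · rw [show Finset.Icc n k = ∅ from Finset.Icc_eq_empty (by omega),
            Finset.union_empty] at h
        exact Or.inl (pair_icc hab h)

lemma step_zmod {k : ℕ} (hk : 4 ≤ k) {a b : ℕ} (ha1 : 1 ≤ a) (ha2 : a ≤ k)
    (hb1 : 1 ≤ b) (hb2 : b ≤ k) (hab : a ≠ b)
    (h : IsIcc {a, b} ∨ IsEndForm k {a, b}) :
    (b : ZMod k) = a + 1 ∨ (a : ZMod k) = b + 1 := by
  have hk0 : ((k : ℕ) : ZMod k) = 0 := ZMod.natCast_self k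
  rcases lt_or_gt_of_ne hab with hlt | hlt
  · rcases pair_step hk ha1 ha2 hb1 hb2 hlt h with h' | ⟨rfl, rfl⟩
    · left; rw [h']; push_cast; ring
    · right; rw [hk0]; push_cast; ring
  · rw [Finset.pair_comm] at h
    rcases pair_step hk hb1 hb2 ha1 ha2 hlt h with h' | ⟨rfl, rfl⟩
    · right; rw [h']; push_cast; ring
    · left; rw [hk0]; push_cast; ring

/-- For even `k ≥ 4`, no labelling of the clique of `M_II(k)` satisfies the
split-graph word-representability conditions: `M_II(k)` is non-word-representable.
Here `φ i` is the label of clique vertex `c_i`, `N(b₁) = {c_1,…,c_{k-2},c_k}`,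
`N(b₂) = {c_2,…,c_k}`, and `N(a_i) = {c_i, c_{i+1}}` for `1 ≤ i ≤ k-2`. -/
theorem MII_not_word_representable (k : ℕ) (hk : 4 ≤ k) (hke : Even k) :
    ¬ ∃ φ : ℕ → ℕ,
        Set.InjOn φ (Finset.Icc 1 k) ∧
        (∀ i ∈ Finset.Icc 1 k, φ i ∈ Finset.Icc 1 k) ∧
        SplitWRCond k
          (insert ((Finset.Icc 1 (k - 2) ∪ {k}).image φ)
            (insert ((Finset.Icc 2 k).image φ)
              ((Finset.Icc 1 (k - 2)).image
                (fun i => ({i, i + 1} : Finset ℕ).image φ)))) := by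
  rintro ⟨φ, hinj, hmap, hcond⟩
  obtain ⟨h1, h2, h3⟩ := hcond
  -- basic facts about φ
  have hm : ∀ i, 1 ≤ i → i ≤ k → 1 ≤ φ i ∧ φ i ≤ k := fun i hi1 hi2 =>
    Finset.mem_Icc.mp (hmap i (Finset.mem_Icc.mpr ⟨hi1, hi2⟩))
  have hne : ∀ i j, 1 ≤ i → i ≤ k → 1 ≤ j → j ≤ k → i ≠ j → φ i ≠ φ j := by
    intro i j hi1 hi2 hj1 hj2 hij hc
    exact hij (hinj (by simp [Finset.mem_Icc]; omega) (by simp [Finset.mem_Icc]; omega) hc)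
  have himg : (Finset.Icc 1 k).image φ = Finset.Icc 1 k := by
    apply Finset.eq_of_subset_of_card_le
    · intro u hu
      obtain ⟨i, hi, rfl⟩ := Finset.mem_image.mp hu
      exact hmap i hi
    · rw [Finset.card_image_of_injOn hinj]
  have himg_erase : ∀ j, 1 ≤ j → j ≤ k →
      (Finset.Icc 1 k \ {j}).image φ = Finset.Icc 1 k \ {φ j} := by
    intro j hj1 hj2
    ext u
    simp only [Finset.mem_image, Finset.mem_sdiff, Finset.mem_singleton, Finset.mem_Icc]
    constructor
    · rintro ⟨i, ⟨hi, hij⟩, rfl⟩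
      refine ⟨hm i hi.1 hi.2, fun hc => hij ?_⟩
      exact hinj (by simp [Finset.mem_Icc]; omega) (by simp [Finset.mem_Icc]; omega) hc
    · rintro ⟨hu, hne'⟩
      have : u ∈ (Finset.Icc 1 k).image φ := by
        rw [himg]; exact Finset.mem_Icc.mpr hu
      obtain ⟨i, hi, rfl⟩ := Finset.mem_image.mp this
      refine ⟨i, ⟨Finset.mem_Icc.mp hi, fun hc => hne' (by rw [hc])⟩, rfl⟩
  -- the two big neighborhoods
  have memS1 : (Finset.Icc 1 (k - 2) ∪ {k}).image φ ∈
      (insert ((Finset.Icc 1 (k - 2) ∪ {k}).image φ)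
        (insert ((Finset.Icc 2 k).image φ)
          ((Finset.Icc 1 (k - 2)).image
            (fun i => ({i, i + 1} : Finset ℕ).image φ)))) := Finset.mem_insert_self _ _
  have memS2 : (Finset.Icc 2 k).image φ ∈
      (insert ((Finset.Icc 1 (k - 2) ∪ {k}).image φ)
        (insert ((Finset.Icc 2 k).image φ)
          ((Finset.Icc 1 (k - 2)).image
            (fun i => ({i, i + 1} : Finset ℕ).image φ)))) :=
    Finset.mem_insert_of_mem (Finset.mem_insert_self _ _)
  have hS1 : (Finset.Icc 1 (k - 2) ∪ {k}).image φ = Finset.Icc 1 k \ {φ (k-1)} := by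
    rw [show Finset.Icc 1 (k - 2) ∪ {k} = Finset.Icc 1 k \ {k-1} by
      ext u
      simp only [Finset.mem_union, Finset.mem_Icc, Finset.mem_singleton, Finset.mem_sdiff]
      omega]
    exact himg_erase (k-1) (by omega) (by omega)
  have hS2 : (Finset.Icc 2 k).image φ = Finset.Icc 1 k \ {φ 1} := by
    rw [show Finset.Icc 2 k = Finset.Icc 1 k \ {1} by
      ext u
      simp only [Finset.mem_Icc, Finset.mem_singleton, Finset.mem_sdiff]
      omega]
    exact himg_erase 1 (by omega) (by omega)
  -- steps along the path
  have hstep : ∀ i, 1 ≤ i → i ≤ k - 2 →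
      (φ (i+1) : ZMod k) - φ i = 1 ∨ (φ (i+1) : ZMod k) - φ i = -1 := by
    intro i hi1 hi2
    have hmemA : ({i, i + 1} : Finset ℕ).image φ ∈
        (insert ((Finset.Icc 1 (k - 2) ∪ {k}).image φ)
          (insert ((Finset.Icc 2 k).image φ)
            ((Finset.Icc 1 (k - 2)).image
              (fun i => ({i, i + 1} : Finset ℕ).image φ)))) := by
      refine Finset.mem_insert_of_mem (Finset.mem_insert_of_mem ?_)
      exact Finset.mem_image_of_mem _ (Finset.mem_Icc.mpr ⟨hi1, hi2⟩)
    have hforms := h1 _ hmemA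
    rw [Finset.image_insert, Finset.image_singleton] at hforms
    have hb1 := hm i hi1 (by omega)
    have hb2 := hm (i+1) (by omega) (by omega)
    have hnab : φ i ≠ φ (i+1) := hne i (i+1) hi1 (by omega) (by omega) (by omega) (by omega)
    rcases step_zmod hk hb1.1 hb1.2 hb2.1 hb2.2 hnab hforms with h' | h'
    · left; rw [h']; ring
    · right; rw [show (φ i : ZMod k) = φ (i+1) + 1 from h']; ring
  -- constant direction
  have hconst : ∀ i, 1 ≤ i → i + 1 ≤ k - 2 →
      (φ (i+1+1) : ZMod k) - φ (i+1) = (φ (i+1) : ZMod k) - φ i := by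
    intro i hi1 hi2
    rcases hstep i hi1 (by omega) with h' | h' <;>
      rcases hstep (i+1) (by omega) hi2 with h'' | h''
    · rw [h', h'']
    · exfalso
      have hc : (φ (i+1+1) : ZMod k) = φ i := by linear_combination h' + h''
      have e1 := hm i hi1 (by omega)
      have e2 := hm (i+1+1) (by omega) (by omega)
      have := cast_inj' hk hc e2.1 e2.2 e1.1 e1.2
      exact hne (i+1+1) i (by omega) (by omega) hi1 (by omega) (by omega) this
    · exfalso
      have hc : (φ (i+1+1) : ZMod k) = φ i := by linear_combination h' + h''
      have e1 := hm i hi1 (by omega)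
      have e2 := hm (i+1+1) (by omega) (by omega)
      have := cast_inj' hk hc e2.1 e2.2 e1.1 e1.2
      exact hne (i+1+1) i (by omega) (by omega) hi1 (by omega) (by omega) this
    · rw [h', h'']
  -- all steps equal the first one
  set e : ZMod k := (φ (1+1) : ZMod k) - φ 1 with he_def
  have hsame : ∀ j, 1 ≤ j → j ≤ k - 2 → (φ (j+1) : ZMod k) - φ j = e := by
    intro j hj
    induction j, hj using Nat.le_induction with
    | base => intro _; rfl
    | succ n hn ih =>
      intro hn2
      rw [hconst n hn hn2]
      exact ih (by omega)
  -- telescoping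
  have htel : ∀ j, 1 ≤ j → j ≤ k - 2 → (φ (j+1) : ZMod k) - φ 1 = (j : ZMod k) * e := by
    intro j hj
    induction j, hj using Nat.le_induction with
    | base =>
      intro h'
      rw [hsame 1 le_rfl h']
      push_cast
      ring
    | succ n hn ih =>
      intro hn2
      have ha := hsame (n+1) (by omega) hn2
      have hb := ih (by omega)
      push_cast
      push_cast at hb
      linear_combination ha + hb
  -- conclude the mod-k relation between x := φ (k-1) and y := φ 1
  have hx := hm (k-1) (by omega) (by omega)
  have hy := hm 1 (by omega) (by omega)
  have hfinal := htel (k-2) (by omega) le_rfl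
  rw [show k - 2 + 1 = k - 1 by omega] at hfinal
  have hk2 : ((k-2 : ℕ) : ZMod k) = -2 := by
    have h4 : ((k-2 : ℕ) : ZMod k) + ((2:ℕ) : ZMod k) = ((k:ℕ) : ZMod k) := by
      rw [← Nat.cast_add]
      congr 1
      omega
    rw [ZMod.natCast_self] at h4
    push_cast at h4
    linear_combination h4
  rw [hk2] at hfinal
  have hrel : (φ (k-1) + 2 = φ 1 ∨ φ (k-1) + 2 = φ 1 + k) ∨
      (φ 1 + 2 = φ (k-1) ∨ φ 1 + 2 = φ (k-1) + k) := by
    rcases hstep 1 le_rfl (by omega) with h' | h'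
    · left
      have hc : ((φ (k-1) + 2 : ℕ) : ZMod k) = ((φ 1 : ℕ) : ZMod k) := by
        push_cast
        rw [← he_def] at h'
        linear_combination hfinal - 2 * h'
      rw [ZMod.natCast_eq_natCast_iff] at hc
      have hc' : (φ (k-1) + 2) % k = (φ 1) % k := hc
      exact modeq_cases hk hc' (by omega) (by omega) (by omega) (by omega)
    · right
      have hc : ((φ 1 + 2 : ℕ) : ZMod k) = ((φ (k-1) : ℕ) : ZMod k) := by
        push_cast
        rw [← he_def] at h'
        linear_combination - hfinal + 2 * h'
      rw [ZMod.natCast_eq_natCast_iff] at hc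
      have hc' : (φ 1 + 2) % k = (φ (k-1)) % k := hc
      exact modeq_cases hk hc' (by omega) (by omega) (by omega) (by omega)
  -- final case analysis on the positions of the holes x = φ (k-1), y = φ 1
  have hS1int : 2 ≤ φ (k-1) → φ (k-1) ≤ k - 1 →
      (Finset.Icc 1 (k - 2) ∪ {k}).image φ
        = Finset.Icc 1 (φ (k-1) - 1) ∪ Finset.Icc (φ (k-1) + 1) k := by
    intro hxa hxb
    rw [hS1]
    ext u
    simp only [Finset.mem_sdiff, Finset.mem_Icc, Finset.mem_singleton, Finset.mem_union]
    omega
  have hS2int : 2 ≤ φ 1 → φ 1 ≤ k - 1 →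
      (Finset.Icc 2 k).image φ
        = Finset.Icc 1 (φ 1 - 1) ∪ Finset.Icc (φ 1 + 1) k := by
    intro hya hyb
    rw [hS2]
    ext u
    simp only [Finset.mem_sdiff, Finset.mem_Icc, Finset.mem_singleton, Finset.mem_union]
    omega
  rcases (show φ 1 = 1 ∨ φ 1 = k ∨ (2 ≤ φ 1 ∧ φ 1 ≤ k - 1) by omega) with hy1 | hyk | hyint <;>
    rcases (show φ (k-1) = 1 ∨ φ (k-1) = k ∨ (2 ≤ φ (k-1) ∧ φ (k-1) ≤ k - 1) by omega)
      with hx1 | hxk | hxint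
  · omega
  · omega
  · -- y = 1, x internal
    have hS2' : (Finset.Icc 2 k).image φ = Finset.Icc 2 k := by
      rw [hS2, hy1]
      ext u
      simp only [Finset.mem_sdiff, Finset.mem_Icc, Finset.mem_singleton]
      omega
    have := h2 _ memS1 _ memS2 (φ (k-1) - 1) (φ (k-1) + 1) 2 k (by omega)
      (hS1int hxint.1 hxint.2) (by omega) hS2'
    omega
  · omega
  · omega
  · -- y = k, x internal
    have hS2' : (Finset.Icc 2 k).image φ = Finset.Icc 1 (k-1) := by
      rw [hS2, hyk]
      ext u
      simp only [Finset.mem_sdiff, Finset.mem_Icc, Finset.mem_singleton]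
      omega
    have := h2 _ memS1 _ memS2 (φ (k-1) - 1) (φ (k-1) + 1) 1 (k-1) (by omega)
      (hS1int hxint.1 hxint.2) (by omega) hS2'
    omega
  · -- y internal, x = 1
    have hS1' : (Finset.Icc 1 (k - 2) ∪ {k}).image φ = Finset.Icc 2 k := by
      rw [hS1, hx1]
      ext u
      simp only [Finset.mem_sdiff, Finset.mem_Icc, Finset.mem_singleton]
      omega
    have := h2 _ memS2 _ memS1 (φ 1 - 1) (φ 1 + 1) 2 k (by omega)
      (hS2int hyint.1 hyint.2) (by omega) hS1'
    omega
  · -- y internal, x = k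
    have hS1' : (Finset.Icc 1 (k - 2) ∪ {k}).image φ = Finset.Icc 1 (k-1) := by
      rw [hS1, hxk]
      ext u
      simp only [Finset.mem_sdiff, Finset.mem_Icc, Finset.mem_singleton]
      omega
    have := h2 _ memS2 _ memS1 (φ 1 - 1) (φ 1 + 1) 1 (k-1) (by omega)
      (hS2int hyint.1 hyint.2) (by omega) hS1'
    omega
  · -- both internal
    have := h3 _ memS1 _ memS2 (φ (k-1) - 1) (φ (k-1) + 1) (φ 1 - 1) (φ 1 + 1)
      (by omega) (by omega) (hS1int hxint.1 hxint.2) (hS2int hyint.1 hyint.2)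
    omega
end

section
/- For every even integer k ≥ 4, there is no bijection φ from the clique of M_III(k) to {1,...,k+1} satisfying the split-graph word-representability conditions (each φ(N(a)) is an interval [l,r] or [1,m]∪[n,k+1] with m < n; the cross conditions between such neighborhoods hold). Hence M_III(k) is non-word-representable. -/
def CycAdj (K a b : ℕ) : Prop :=
  b = a + 1 ∨ a = b + 1 ∨ (a = 1 ∧ b = K) ∨ (a = K ∧ b = 1)

lemma pair_adj {K a b : ℕ} (hK : 5 ≤ K) (ha : a ∈ Finset.Icc 1 K)
    (hb : b ∈ Finset.Icc 1 K) (hab : a ≠ b)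
    (h : IsIcc {a, b} ∨ IsEndForm K {a, b}) : CycAdj K a b := by
  simp only [Finset.mem_Icc] at ha hb
  have hcard : ({a, b} : Finset ℕ).card = 2 := Finset.card_pair hab
  rcases h with ⟨l, r, hlr, hS⟩ | ⟨m, n, hmn, hS⟩
  · have hma : a ∈ Finset.Icc l r := hS ▸ (by simp)
    have hmb : b ∈ Finset.Icc l r := hS ▸ (by simp)
    rw [hS, Nat.card_Icc] at hcard
    simp only [Finset.mem_Icc] at hma hmb
    unfold CycAdj; omega
  · have hd : Disjoint (Finset.Icc 1 m) (Finset.Icc n K) := by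
      rw [Finset.disjoint_left]
      intro x hx hx'
      simp only [Finset.mem_Icc] at hx hx'
      omega
    have hma : a ∈ Finset.Icc 1 m ∪ Finset.Icc n K := hS ▸ (by simp)
    have hmb : b ∈ Finset.Icc 1 m ∪ Finset.Icc n K := hS ▸ (by simp)
    rw [hS, Finset.card_union_of_disjoint hd, Nat.card_Icc, Nat.card_Icc] at hcard
    simp only [Finset.mem_union, Finset.mem_Icc] at hma hmb
    unfold CycAdj; omega

lemma comp_adj {K x y : ℕ} (hK : 5 ≤ K) (hx : x ∈ Finset.Icc 1 K)
    (hy : y ∈ Finset.Icc 1 K) (hxy : x ≠ y)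
    (h : IsIcc (Finset.Icc 1 K \ {x, y}) ∨ IsEndForm K (Finset.Icc 1 K \ {x, y})) :
    CycAdj K x y := by
  have hsub : ({x, y} : Finset ℕ) ⊆ Finset.Icc 1 K := by
    intro z hz
    simp only [Finset.mem_insert, Finset.mem_singleton] at hz
    rcases hz with rfl | rfl <;> assumption
  have hcard : (Finset.Icc 1 K \ {x, y}).card = K - 2 := by
    rw [Finset.card_sdiff_of_subset hsub, Finset.card_pair hxy, Nat.card_Icc]
    omega
  have hxn : x ∉ Finset.Icc 1 K \ {x, y} := by simp
  have hyn : y ∉ Finset.Icc 1 K \ {x, y} := by simp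
  simp only [Finset.mem_Icc] at hx hy
  rcases h with ⟨l, r, hlr, hS⟩ | ⟨m, n, hmn, hS⟩
  · rw [hS] at hxn hyn hcard
    have hl : l ∈ Finset.Icc 1 K \ {x, y} := by
      rw [hS]; exact Finset.mem_Icc.mpr ⟨le_rfl, hlr⟩
    have hr : r ∈ Finset.Icc 1 K \ {x, y} := by
      rw [hS]; exact Finset.mem_Icc.mpr ⟨hlr, le_rfl⟩
    rw [Finset.mem_sdiff, Finset.mem_Icc] at hl hr
    rw [Nat.card_Icc] at hcard
    simp only [Finset.mem_Icc, not_and, not_le] at hxn hyn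
    unfold CycAdj; omega
  · have hd : Disjoint (Finset.Icc 1 m) (Finset.Icc n K) := by
      rw [Finset.disjoint_left]
      intro z hz hz'
      simp only [Finset.mem_Icc] at hz hz'
      omega
    rw [hS] at hxn hyn hcard
    rw [Finset.card_union_of_disjoint hd, Nat.card_Icc, Nat.card_Icc] at hcard
    simp only [Finset.mem_union, Finset.mem_Icc, not_or, not_and, not_le] at hxn hyn
    unfold CycAdj; omega


set_option maxHeartbeats 1600000 in
/-- For even `k ≥ 4`, no labelling of the clique of `M_III(k)` (with `k+1` clique
vertices) satisfies the split-graph word-representability conditions: `M_III(k)`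
is non-word-representable. Here `φ i` is the label of clique vertex `c_i`,
`N(b) = {c_2,…,c_{k-1},c_{k+1}}`, and `N(a_i) = {c_i, c_{i+1}}` for `1 ≤ i ≤ k-1`. -/
theorem MIII_not_word_representable (k : ℕ) (hk : 4 ≤ k) (hke : Even k) :
    ¬ ∃ φ : ℕ → ℕ,
        Set.InjOn φ (Finset.Icc 1 (k + 1)) ∧
        (∀ i ∈ Finset.Icc 1 (k + 1), φ i ∈ Finset.Icc 1 (k + 1)) ∧
        SplitWRCond (k + 1)
          (insert ((Finset.Icc 2 (k - 1) ∪ {k + 1}).image φ)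
            ((Finset.Icc 1 (k - 1)).image
              (fun i => ({i, i + 1} : Finset ℕ).image φ))) := by
  rintro ⟨φ, hinj, hmap, hcond⟩
  obtain ⟨hgood, -, -⟩ := hcond
  have hK5 : 5 ≤ k + 1 := by omega
  -- basic injectivity / bounds helpers
  have hφinj : ∀ i j, 1 ≤ i → i ≤ k + 1 → 1 ≤ j → j ≤ k + 1 → φ i = φ j → i = j := by
    intro i j hi1 hi2 hj1 hj2 h
    exact hinj (by simp only [Finset.coe_Icc, Set.mem_Icc]; omega)
      (by simp only [Finset.coe_Icc, Set.mem_Icc]; omega) h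
  have hφb : ∀ j, 1 ≤ j → j ≤ k + 1 → 1 ≤ φ j ∧ φ j ≤ k + 1 := by
    intro j h1 h2
    have := hmap j (Finset.mem_Icc.mpr ⟨h1, h2⟩)
    simpa [Finset.mem_Icc] using this
  -- Step A: each consecutive pair is a cycle edge
  have hstepAdj : ∀ i, 1 ≤ i → i ≤ k - 1 → CycAdj (k + 1) (φ i) (φ (i + 1)) := by
    intro i h1 h2
    have hiF : ({i, i + 1} : Finset ℕ).image φ ∈
        (insert ((Finset.Icc 2 (k - 1) ∪ {k + 1}).image φ)
          ((Finset.Icc 1 (k - 1)).image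
            (fun i => ({i, i + 1} : Finset ℕ).image φ))) := by
      apply Finset.mem_insert_of_mem
      exact Finset.mem_image_of_mem _ (Finset.mem_Icc.mpr ⟨h1, h2⟩)
    have h' := hgood _ hiF
    have himg : ({i, i + 1} : Finset ℕ).image φ = {φ i, φ (i + 1)} := by
      simp [Finset.image_insert]
    rw [himg] at h'
    refine pair_adj hK5 ?_ ?_ ?_ h'
    · exact hmap i (Finset.mem_Icc.mpr ⟨h1, by omega⟩)
    · exact hmap (i + 1) (Finset.mem_Icc.mpr ⟨by omega, by omega⟩)
    · intro he
      have := hφinj i (i + 1) (by omega) (by omega) (by omega) (by omega) he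
      omega
  -- Step B: image is everything
  have himage : (Finset.Icc 1 (k + 1)).image φ = Finset.Icc 1 (k + 1) := by
    apply Finset.eq_of_subset_of_card_le
    · intro z hz
      obtain ⟨i, hi, rfl⟩ := Finset.mem_image.mp hz
      exact hmap i hi
    · rw [Finset.card_image_of_injOn hinj]
  -- Step C: the big neighborhood is the complement of {φ 1, φ k}
  have hBset : (Finset.Icc 2 (k - 1) ∪ {k + 1}).image φ
      = Finset.Icc 1 (k + 1) \ {φ 1, φ k} := by
    ext z
    simp only [Finset.mem_image, Finset.mem_union, Finset.mem_Icc, Finset.mem_sdiff,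
      Finset.mem_insert, Finset.mem_singleton, not_or]
    constructor
    · rintro ⟨i, hi, rfl⟩
      have hi' : 1 ≤ i ∧ i ≤ k + 1 := by omega
      refine ⟨hφb i hi'.1 hi'.2, ?_, ?_⟩
      · intro he
        have := hφinj i 1 hi'.1 hi'.2 (by omega) (by omega) he
        omega
      · intro he
        have := hφinj i k hi'.1 hi'.2 (by omega) (by omega) he
        omega
    · rintro ⟨⟨hz1, hz2⟩, hne1, hnek⟩
      have hz : z ∈ (Finset.Icc 1 (k + 1)).image φ := by
        rw [himage]; exact Finset.mem_Icc.mpr ⟨hz1, hz2⟩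
      obtain ⟨i, hi, rfl⟩ := Finset.mem_image.mp hz
      rw [Finset.mem_Icc] at hi
      refine ⟨i, ?_, rfl⟩
      have hne1' : i ≠ 1 := fun h => hne1 (by rw [h])
      have hnek' : i ≠ k := fun h => hnek (by rw [h])
      omega
  -- Step C2: the closing pair is also a cycle edge
  have hB := hgood _ (Finset.mem_insert_self _ _)
  rw [hBset] at hB
  have hadj1k : CycAdj (k + 1) (φ 1) (φ k) := by
    refine comp_adj hK5 ?_ ?_ ?_ hB
    · exact hmap 1 (Finset.mem_Icc.mpr ⟨le_rfl, by omega⟩)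
    · exact hmap k (Finset.mem_Icc.mpr ⟨by omega, by omega⟩)
    · intro he
      have := hφinj 1 k (by omega) (by omega) (by omega) (by omega) he
      omega
  -- Step D: ZMod (k+1) walk argument
  have hcast : ∀ a b : ℕ, 1 ≤ a → a ≤ k + 1 → 1 ≤ b → b ≤ k + 1 →
      ((a : ZMod (k + 1)) = (b : ZMod (k + 1))) → a = b := by
    intro a b h1 h2 h3 h4 h
    have ha' : a = (a - 1) + 1 := by omega
    have hb' : b = (b - 1) + 1 := by omega
    rw [ha', hb'] at h
    push_cast at h
    have h' : ((a - 1 : ℕ) : ZMod (k + 1)) = ((b - 1 : ℕ) : ZMod (k + 1)) :=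
      add_right_cancel h
    have hv := congrArg ZMod.val h'
    rw [ZMod.val_cast_of_lt (by omega), ZMod.val_cast_of_lt (by omega)] at hv
    omega
  have hkcast : ((k : ℕ) : ZMod (k + 1)) = -1 := by
    have h0 : ((k + 1 : ℕ) : ZMod (k + 1)) = 0 := ZMod.natCast_self _
    push_cast at h0
    exact eq_neg_of_add_eq_zero_left h0
  have hA2Z : ∀ a b : ℕ, CycAdj (k + 1) a b →
      ((b : ZMod (k + 1)) = (a : ZMod (k + 1)) + 1 ∨
        (a : ZMod (k + 1)) = (b : ZMod (k + 1)) + 1) := by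
    intro a b h
    rcases h with h | h | ⟨h1, h2⟩ | ⟨h1, h2⟩
    · left; rw [h]; push_cast; ring
    · right; rw [h]; push_cast; ring
    · right; subst h1; subst h2
      rw [show ((k + 1 : ℕ) : ZMod (k + 1)) = 0 from ZMod.natCast_self _]
      norm_num
    · left; subst h1; subst h2
      rw [show ((k + 1 : ℕ) : ZMod (k + 1)) = 0 from ZMod.natCast_self _]
      norm_num
  have hstep : ∀ i, 1 ≤ i → i ≤ k - 1 → ∃ ε : ZMod (k + 1),
      (ε = 1 ∨ ε = -1) ∧ (φ (i + 1) : ZMod (k + 1)) = (φ i : ZMod (k + 1)) + ε := by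
    intro i h1 h2
    rcases hA2Z _ _ (hstepAdj i h1 h2) with h | h
    · exact ⟨1, Or.inl rfl, h⟩
    · exact ⟨-1, Or.inr rfl, by rw [h]; ring⟩
  have hsame : ∀ i (a b : ZMod (k + 1)), 1 ≤ i → i + 1 ≤ k - 1 →
      (a = 1 ∨ a = -1) → (b = 1 ∨ b = -1) →
      ((φ (i + 1) : ZMod (k + 1)) = (φ i : ZMod (k + 1)) + a) →
      ((φ (i + 2) : ZMod (k + 1)) = (φ (i + 1) : ZMod (k + 1)) + b) → b = a := by
    intro i a b hi1 hi2 ha hb h1 h2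
    by_contra hne
    have hba : b = -a := by
      rcases ha with rfl | rfl <;> rcases hb with rfl | rfl
      · exact absurd rfl hne
      · rfl
      · exact (neg_neg 1).symm
      · exact absurd rfl hne
    rw [hba] at h2
    have heq : (φ (i + 2) : ZMod (k + 1)) = (φ i : ZMod (k + 1)) := by
      rw [h2, h1]; ring
    have hb2 := hφb (i + 2) (by omega) (by omega)
    have hb0 := hφb i (by omega) (by omega)
    have := hcast _ _ hb2.1 hb2.2 hb0.1 hb0.2 heq
    have := hφinj (i + 2) i (by omega) (by omega) (by omega) (by omega) this
    omega
  obtain ⟨ε, hε, hψ2⟩ := hstep 1 le_rfl (by omega)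
  have hconst : ∀ i, 1 ≤ i → i ≤ k - 1 →
      (φ (i + 1) : ZMod (k + 1)) = (φ i : ZMod (k + 1)) + ε := by
    intro i h1
    induction i, h1 using Nat.le_induction with
    | base => intro _; exact hψ2
    | succ j hj ih =>
      intro hj2
      obtain ⟨b, hb, hψ⟩ := hstep (j + 1) (by omega) hj2
      have hprev : (φ (j + 1) : ZMod (k + 1)) = (φ j : ZMod (k + 1)) + ε :=
        ih (by omega)
      have hbe : b = ε := hsame j ε b hj hj2 hε hb hprev hψ
      rw [hbe] at hψ
      exact hψ
  have hform : ∀ i, 1 ≤ i → i ≤ k →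
      (φ i : ZMod (k + 1)) = (φ 1 : ZMod (k + 1)) + ((i - 1 : ℕ) : ZMod (k + 1)) * ε := by
    intro i h1
    induction i, h1 using Nat.le_induction with
    | base => intro _; simp
    | succ j hj ih =>
      intro h2
      have h := hconst j hj (by omega)
      rw [h, ih (by omega)]
      rw [show (j + 1 - 1 : ℕ) = (j - 1) + 1 from by omega]
      push_cast
      ring
  have hclose := hA2Z _ _ hadj1k
  have hk' := hform k (by omega) le_rfl
  have hε2 : ε * ε = 1 := by rcases hε with rfl | rfl <;> ring
  have hcε : ((k - 1 : ℕ) : ZMod (k + 1)) * ε = 1 ∨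
      ((k - 1 : ℕ) : ZMod (k + 1)) * ε = -1 := by
    rcases hclose with h | h
    · left
      have := hk'.symm.trans h
      exact add_left_cancel this
    · right
      have h' : (φ k : ZMod (k + 1)) = (φ 1 : ZMod (k + 1)) + (-1) := by
        rw [h]; ring
      have := hk'.symm.trans h'
      exact add_left_cancel this
  have hc : ((k - 1 : ℕ) : ZMod (k + 1)) = ε ∨ ((k - 1 : ℕ) : ZMod (k + 1)) = -ε := by
    rcases hcε with h | h
    · left
      have : ((k - 1 : ℕ) : ZMod (k + 1)) * (ε * ε) = 1 * ε := by
        rw [← mul_assoc, h]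
      rw [hε2, mul_one, one_mul] at this
      exact this
    · right
      have : ((k - 1 : ℕ) : ZMod (k + 1)) * (ε * ε) = -1 * ε := by
        rw [← mul_assoc, h]
      rw [hε2, mul_one] at this
      rw [this]; ring
  have hfin : ((k - 1 : ℕ) : ZMod (k + 1)) = 1 ∨ ((k - 1 : ℕ) : ZMod (k + 1)) = -1 := by
    rcases hc with h | h <;> rcases hε with rfl | rfl
    · left; exact h
    · right; exact h
    · right; rw [h]
    · left; rw [h]; ring
  rcases hfin with h | h
  · have : (k - 1 : ℕ) = 1 := by
      apply hcast _ _ (by omega) (by omega) (by omega) (by omega)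
      rw [h, Nat.cast_one]
    omega
  · have : (k - 1 : ℕ) = k := by
      apply hcast _ _ (by omega) (by omega) (by omega) (by omega)
      rw [h, hkcast]
    omega
end

section
/- There is no bijection φ from {c_1,...,c_6} to {1,...,6} such that each of the sets φ({c_1,c_2}), φ({c_3,c_4}), φ({c_5,c_6}), φ({c_2,c_4,c_6}) is either an interval [l,r] of {1,...,6} or of the form [1,m] ∪ [n,6] with m < n, subject additionally to the cross conditions: if one of these image sets equals [1,m]∪[n,6] and another equals [l,r], then l > m or r < n. Hence the graph M_IV is non-word-representable. -/
lemma good2 (a b : ℕ) (ha1 : 1 ≤ a) (ha6 : a ≤ 6) (hb1 : 1 ≤ b) (hb6 : b ≤ 6)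
    (hne : a ≠ b) (hg : IsIcc {a, b} ∨ IsEndForm 6 {a, b}) :
    b = a + 1 ∨ a = b + 1 ∨ (a = 1 ∧ b = 6) ∨ (a = 6 ∧ b = 1) := by
  have hcard : ({a, b} : Finset ℕ).card = 2 := Finset.card_pair hne
  rcases hg with ⟨l, r, hlr, hS⟩ | ⟨m, n, hmn, hS⟩
  · have ha : a ∈ Finset.Icc l r := hS ▸ (by simp)
    have hb : b ∈ Finset.Icc l r := hS ▸ (by simp)
    rw [Finset.mem_Icc] at ha hb
    rw [hS, Nat.card_Icc] at hcard
    omega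
  · have ha : a ∈ Finset.Icc 1 m ∪ Finset.Icc n 6 := hS ▸ (by simp)
    have hb : b ∈ Finset.Icc 1 m ∪ Finset.Icc n 6 := hS ▸ (by simp)
    rw [Finset.mem_union, Finset.mem_Icc, Finset.mem_Icc] at ha hb
    rw [hS] at hcard
    by_cases hn : n ≤ 6
    · have hdisj : Disjoint (Finset.Icc 1 m) (Finset.Icc n 6) := by
        rw [Finset.disjoint_left]
        intro x hx hx'
        rw [Finset.mem_Icc] at hx hx'
        omega
      rw [Finset.card_union_of_disjoint hdisj, Nat.card_Icc, Nat.card_Icc] at hcard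
      omega
    · have he : Finset.Icc n 6 = ∅ := by rw [Finset.Icc_eq_empty]; omega
      rw [he, Finset.union_empty, Nat.card_Icc] at hcard
      omega

set_option maxHeartbeats 1000000 in
lemma good3 (a b c : ℕ) (ha1 : 1 ≤ a) (ha6 : a ≤ 6) (hb1 : 1 ≤ b) (hb6 : b ≤ 6)
    (hc1 : 1 ≤ c) (hc6 : c ≤ 6)
    (hab : a ≠ b) (hac : a ≠ c) (hbc : b ≠ c)
    (hg : IsIcc {a, b, c} ∨ IsEndForm 6 {a, b, c}) :
    ((1 ≤ a ∧ a ≤ 3) ∧ (1 ≤ b ∧ b ≤ 3) ∧ (1 ≤ c ∧ c ≤ 3)) ∨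
    ((2 ≤ a ∧ a ≤ 4) ∧ (2 ≤ b ∧ b ≤ 4) ∧ (2 ≤ c ∧ c ≤ 4)) ∨
    ((3 ≤ a ∧ a ≤ 5) ∧ (3 ≤ b ∧ b ≤ 5) ∧ (3 ≤ c ∧ c ≤ 5)) ∨
    ((4 ≤ a ∧ a ≤ 6) ∧ (4 ≤ b ∧ b ≤ 6) ∧ (4 ≤ c ∧ c ≤ 6)) ∨
    ((a = 1 ∨ a = 5 ∨ a = 6) ∧ (b = 1 ∨ b = 5 ∨ b = 6) ∧ (c = 1 ∨ c = 5 ∨ c = 6)) ∨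
    ((a = 1 ∨ a = 2 ∨ a = 6) ∧ (b = 1 ∨ b = 2 ∨ b = 6) ∧ (c = 1 ∨ c = 2 ∨ c = 6)) := by
  have hcard : ({a, b, c} : Finset ℕ).card = 3 := by
    rw [Finset.card_insert_of_notMem (by simp [hab, hac]), Finset.card_pair hbc]
  rcases hg with ⟨l, r, hlr, hS⟩ | ⟨m, n, hmn, hS⟩
  · have ha : a ∈ Finset.Icc l r := hS ▸ (by simp)
    have hb : b ∈ Finset.Icc l r := hS ▸ (by simp)
    have hc : c ∈ Finset.Icc l r := hS ▸ (by simp)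
    rw [Finset.mem_Icc] at ha hb hc
    rw [hS, Nat.card_Icc] at hcard
    omega
  · have ha : a ∈ Finset.Icc 1 m ∪ Finset.Icc n 6 := hS ▸ (by simp)
    have hb : b ∈ Finset.Icc 1 m ∪ Finset.Icc n 6 := hS ▸ (by simp)
    have hc : c ∈ Finset.Icc 1 m ∪ Finset.Icc n 6 := hS ▸ (by simp)
    rw [Finset.mem_union, Finset.mem_Icc, Finset.mem_Icc] at ha hb hc
    rw [hS] at hcard
    by_cases hn : n ≤ 6
    · have hdisj : Disjoint (Finset.Icc 1 m) (Finset.Icc n 6) := by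
        rw [Finset.disjoint_left]
        intro x hx hx'
        rw [Finset.mem_Icc] at hx hx'
        omega
      rw [Finset.card_union_of_disjoint hdisj, Nat.card_Icc, Nat.card_Icc] at hcard
      have hmn' : (m = 0 ∧ n = 4) ∨ (m = 1 ∧ n = 5) ∨ (m = 2 ∧ n = 6) := by omega
      rcases hmn' with ⟨hm, hn'⟩ | ⟨hm, hn'⟩ | ⟨hm, hn'⟩ <;> subst hm <;> subst hn' <;> omega
    · have he : Finset.Icc n 6 = ∅ := by rw [Finset.Icc_eq_empty]; omega
      rw [he, Finset.union_empty, Nat.card_Icc] at hcard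
      omega

set_option maxHeartbeats 2000000 in
/-- No labelling of the clique `{c_1,…,c_6}` of `M_IV` by `1,…,6` makes each of
the neighborhoods `{c_1,c_2}`, `{c_3,c_4}`, `{c_5,c_6}`, `{c_2,c_4,c_6}` an
interval or a set `[1,m] ∪ [n,6]` with `m < n`, subject to the cross condition:
hence `M_IV` is non-word-representable. -/
theorem MIV_not_word_representable :
    ¬ ∃ φ : ℕ → ℕ,
        Set.InjOn φ (Finset.Icc 1 6) ∧
        (∀ i ∈ Finset.Icc 1 6, φ i ∈ Finset.Icc 1 6) ∧
        (∀ S ∈ ({({1, 2} : Finset ℕ).image φ, ({3, 4} : Finset ℕ).image φ,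
                 ({5, 6} : Finset ℕ).image φ, ({2, 4, 6} : Finset ℕ).image φ} :
                  Finset (Finset ℕ)),
           IsIcc S ∨ IsEndForm 6 S) ∧
        (∀ S ∈ ({({1, 2} : Finset ℕ).image φ, ({3, 4} : Finset ℕ).image φ,
                 ({5, 6} : Finset ℕ).image φ, ({2, 4, 6} : Finset ℕ).image φ} :
                  Finset (Finset ℕ)),
         ∀ T ∈ ({({1, 2} : Finset ℕ).image φ, ({3, 4} : Finset ℕ).image φ,
                 ({5, 6} : Finset ℕ).image φ, ({2, 4, 6} : Finset ℕ).image φ} :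
                  Finset (Finset ℕ)),
           CrossII 6 S T) := by
  rintro ⟨φ, hinj, hmem, hgood, -⟩
  have h1 := hmem 1 (by decide)
  have h2 := hmem 2 (by decide)
  have h3 := hmem 3 (by decide)
  have h4 := hmem 4 (by decide)
  have h5 := hmem 5 (by decide)
  have h6 := hmem 6 (by decide)
  rw [Finset.mem_Icc] at h1 h2 h3 h4 h5 h6
  have hne : ∀ i j : ℕ, i ∈ Finset.Icc 1 6 → j ∈ Finset.Icc 1 6 → i ≠ j → φ i ≠ φ j := by
    intro i j hi hj hij h
    exact hij (hinj (Finset.mem_coe.mpr hi) (Finset.mem_coe.mpr hj) h)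
  have n12 := hne 1 2 (by decide) (by decide) (by decide)
  have n13 := hne 1 3 (by decide) (by decide) (by decide)
  have n14 := hne 1 4 (by decide) (by decide) (by decide)
  have n15 := hne 1 5 (by decide) (by decide) (by decide)
  have n16 := hne 1 6 (by decide) (by decide) (by decide)
  have n23 := hne 2 3 (by decide) (by decide) (by decide)
  have n24 := hne 2 4 (by decide) (by decide) (by decide)
  have n25 := hne 2 5 (by decide) (by decide) (by decide)
  have n26 := hne 2 6 (by decide) (by decide) (by decide)
  have n34 := hne 3 4 (by decide) (by decide) (by decide)
  have n35 := hne 3 5 (by decide) (by decide) (by decide)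
  have n36 := hne 3 6 (by decide) (by decide) (by decide)
  have n45 := hne 4 5 (by decide) (by decide) (by decide)
  have n46 := hne 4 6 (by decide) (by decide) (by decide)
  have n56 := hne 5 6 (by decide) (by decide) (by decide)
  have e1 : ({1, 2} : Finset ℕ).image φ = {φ 1, φ 2} := by
    simp [Finset.image_insert]
  have e2 : ({3, 4} : Finset ℕ).image φ = {φ 3, φ 4} := by
    simp [Finset.image_insert]
  have e3 : ({5, 6} : Finset ℕ).image φ = {φ 5, φ 6} := by
    simp [Finset.image_insert]
  have e4 : ({2, 4, 6} : Finset ℕ).image φ = {φ 2, φ 4, φ 6} := by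
    simp [Finset.image_insert]
  have g1 := hgood _ (Finset.mem_insert_self _ _)
  have g2 := hgood (({3, 4} : Finset ℕ).image φ)
    (Finset.mem_insert_of_mem (Finset.mem_insert_self _ _))
  have g3 := hgood (({5, 6} : Finset ℕ).image φ)
    (Finset.mem_insert_of_mem (Finset.mem_insert_of_mem (Finset.mem_insert_self _ _)))
  have g4 := hgood (({2, 4, 6} : Finset ℕ).image φ)
    (Finset.mem_insert_of_mem (Finset.mem_insert_of_mem (Finset.mem_insert_of_mem
      (Finset.mem_singleton_self _))))
  rw [e1] at g1
  rw [e2] at g2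
  rw [e3] at g3
  rw [e4] at g4
  have p1 := good2 _ _ h1.1 h1.2 h2.1 h2.2 n12 g1
  have p2 := good2 _ _ h3.1 h3.2 h4.1 h4.2 n34 g2
  have p3 := good2 _ _ h5.1 h5.2 h6.1 h6.2 n56 g3
  have p4 := good3 _ _ _ h2.1 h2.2 h4.1 h4.2 h6.1 h6.2 n24 n26 n46 g4
  omega
end

section
/- Let w = p1 u p2 p3 be a word over a finite set V, where p1, p2 are permutation words of V, p3 is a permutation word of a subset C ∪ A ⊆ V, and u is a permutation word of B = V \ (C ∪ A) with u = (p1|_B)^R. Then for any two distinct elements a, b of B, the letters a and b do not alternate in w. -/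
private lemma filt0 {V : Type*} [DecidableEq V] {a b : V} {l : List V}
    (ha : l.count a = 0) (hb : l.count b = 0) :
    l.filter (fun x => x = a ∨ x = b) = [] := by
  rw [List.filter_eq_nil_iff]
  intro x hx
  simp only [decide_eq_true_eq, not_or]
  constructor
  · rintro rfl; exact (List.count_eq_zero.mp ha) hx
  · rintro rfl; exact (List.count_eq_zero.mp hb) hx

private lemma filt1 {V : Type*} [DecidableEq V] {a b : V} :
    ∀ {l : List V}, l.count a = 1 → l.count b = 0 →
    l.filter (fun x => x = a ∨ x = b) = [a] := by
  intro l
  induction l with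
  | nil => simp
  | cons h t ih =>
    intro ha hb
    rw [List.count_cons] at ha hb
    rw [List.filter_cons]
    by_cases hha : h = a
    · subst hha
      simp only [beq_self_eq_true, if_true] at ha
      have hhb : h ≠ b := by
        intro e; rw [if_pos (by simp [e])] at hb; omega
      rw [if_pos (by simp), filt0 (by omega) (by
        rw [if_neg (by simp [hhb])] at hb; omega)]
    · have hhb : h ≠ b := by
        intro e; subst e
        rw [if_pos (by simp)] at hb; omega
      rw [if_neg (by simp [hha])] at ha
      rw [if_neg (by simp [hhb])] at hb
      rw [if_neg (by simp [hha, hhb])]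
      exact ih (by omega) (by omega)

private lemma filt2 {V : Type*} [DecidableEq V] {a b : V} (hab : a ≠ b) :
    ∀ {l : List V}, l.count a = 1 → l.count b = 1 →
    l.filter (fun x => x = a ∨ x = b) = [a, b] ∨
    l.filter (fun x => x = a ∨ x = b) = [b, a] := by
  intro l
  induction l with
  | nil => simp
  | cons h t ih =>
    intro ha hb
    rw [List.count_cons] at ha hb
    rw [List.filter_cons]
    by_cases hha : h = a
    · subst hha
      rw [if_pos (by simp)] at ha
      rw [if_neg (by simp [hab])] at hb
      left
      rw [if_pos (by simp)]
      have : t.filter (fun x => x = b ∨ x = h) = [b] :=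
        filt1 (by omega) (by omega)
      have heq : t.filter (fun x => x = h ∨ x = b) = [b] := by
        rw [← this]; apply List.filter_congr; intro x _
        simp [or_comm]
      rw [heq]
    · by_cases hhb : h = b
      · subst hhb
        rw [if_pos (by simp)] at hb
        rw [if_neg (by simp [Ne.symm hab])] at ha
        right
        rw [if_pos (by simp)]
        rw [filt1 (by omega) (by omega)]
      · rw [if_neg (by simp [hha])] at ha
        rw [if_neg (by simp [hhb])] at hb
        rw [if_neg (by simp [hha, hhb])]
        exact ih (by omega) (by omega)

/-- Let `w = p₁ u p₂ p₃` where `p₁, p₂` are permutation words of `V`, `p₃` is a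
permutation word of `C ∪ A ⊆ V`, and `u = (p₁|_B)ᴿ` where `B = V \ (C ∪ A)`.
Then no two distinct elements of `B` alternate in `w`. -/
theorem not_alternates_in_B {V : Type*} [DecidableEq V] [Fintype V]
    (C A : Finset V) (p1 p2 p3 : List V)
    (h1 : ∀ v : V, p1.count v = 1) (h2 : ∀ v : V, p2.count v = 1)
    (h3 : ∀ v : V, p3.count v = if v ∈ C ∪ A then 1 else 0) :
    ∀ a ∈ (C ∪ A)ᶜ, ∀ b ∈ (C ∪ A)ᶜ, a ≠ b →
      ¬ Alternates a b
          (p1 ++ (p1.filter (· ∈ (C ∪ A)ᶜ)).reverse ++ p2 ++ p3) := by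
  intro a ha b hb hab
  unfold Alternates
  rw [List.filter_append, List.filter_append, List.filter_append]
  have hp3 : p3.filter (fun x => x = a ∨ x = b) = [] := by
    apply filt0
    · rw [h3 a, if_neg (Finset.mem_compl.mp ha)]
    · rw [h3 b, if_neg (Finset.mem_compl.mp hb)]
  have hff : (p1.filter (· ∈ (C ∪ A)ᶜ)).filter (fun x => x = a ∨ x = b)
      = p1.filter (fun x => x = a ∨ x = b) := by
    rw [List.filter_filter]
    apply List.filter_congr
    intro x _
    by_cases hx : x = a ∨ x = b
    · have hxm : x ∈ (C ∪ A)ᶜ := by rcases hx with rfl | rfl; exacts [ha, hb]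
      simp only [Finset.mem_compl, Finset.mem_union, not_or] at hxm
      simp [hx, hxm.1, hxm.2]
    · simp [hx]
  have hmid : ((p1.filter (· ∈ (C ∪ A)ᶜ)).reverse).filter (fun x => x = a ∨ x = b)
      = ((p1.filter (fun x => x = a ∨ x = b))).reverse := by
    rw [List.filter_reverse, hff]
  rw [hmid, hp3]
  rcases filt2 hab (h1 a) (h1 b) with h | h <;>
    · rw [h]; simp [List.Chain', List.isChain_append]
end
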